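/- If A ∈ 𝔹ℂ^{n×n} and B ∈ 𝔹ℂ^{m×m} are hyperbolic positive bicomplex matrices, then their bicomplex tensor product A ⊗ⱼ B ∈ 𝔹ℂ^{nm×nm} is hyperbolic positive. -/

import Mathlib

open Complex Matrix Kronecker BigOperators

open scoped ComplexOrder

/-- Bicomplex numbers, modeled as pairs `(z₁, z₂) ∈ ℂ × ℂ` representing `z₁ + j z₂`.
Addition is the componentwise (Prod) addition. -/
abbrev BC : Type := ℂ × ℂ

noncomputable section

/-- Bicomplex multiplication: `(z₁,z₂)·(w₁,w₂) = (z₁w₁ − z₂w₂, z₁w₂ + z₂w₁)`. -/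
def bcMul (z w : BC) : BC := (z.1 * w.1 - z.2 * w.2, z.1 * w.2 + z.2 * w.1)

/-- The `*`-conjugate `Z* = conj z₁ − j conj z₂`. -/
def bcStar (z : BC) : BC := ((starRingEnd ℂ) z.1, -((starRingEnd ℂ) z.2))

/-- First idempotent component `λ₁ = z₁ − i z₂`. -/
def idem1 (z : BC) : ℂ := z.1 - Complex.I * z.2

/-- Second idempotent component `λ₂ = z₁ + i z₂`. -/
def idem2 (z : BC) : ℂ := z.1 + Complex.I * z.2

/-- Membership in `𝔻⁺`: both idempotent components are nonnegative real numbers. -/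
def inDplus (z : BC) : Prop :=
  (idem1 z).im = 0 ∧ 0 ≤ (idem1 z).re ∧ (idem2 z).im = 0 ∧ 0 ≤ (idem2 z).re

/-- A bicomplex matrix `A = A₁ + j A₂` is a pair of complex matrices. -/
abbrev BCMat (I J : Type) : Type := Matrix I J ℂ × Matrix I J ℂ

/-- Bicomplex matrix multiplication, induced by bicomplex multiplication. -/
def bmul {I J K : Type} [Fintype J] (A : BCMat I J) (B : BCMat J K) : BCMat I K :=
  (A.1 * B.1 - A.2 * B.2, A.1 * B.2 + A.2 * B.1)

/-- `(A*)ᵗ`: the entrywise `*`-conjugate followed by transpose. -/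
def bcStarT {I J : Type} (A : BCMat I J) : BCMat J I := (A.1ᴴ, -(A.2ᴴ))

/-- The `(j,k)` entry of a bicomplex matrix, as a bicomplex number. -/
def bcEntry {I J : Type} (A : BCMat I J) (j : I) (k : J) : BC := (A.1 j k, A.2 j k)

/-- First idempotent component `𝒜₁ = A₁ − i A₂` of a bicomplex matrix. -/
def midem1 {I J : Type} (A : BCMat I J) : Matrix I J ℂ := A.1 - Complex.I • A.2

/-- Second idempotent component `𝒜₂ = A₁ + i A₂` of a bicomplex matrix. -/
def midem2 {I J : Type} (A : BCMat I J) : Matrix I J ℂ := A.1 + Complex.I • A.2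

/-- The bicomplex number `(c*)ᵗ · A · c`. -/
def quadForm {I : Type} [Fintype I] (A : BCMat I I) (c : I → BC) : BC :=
  ∑ j, ∑ k, bcMul (bcStar (c j)) (bcMul (bcEntry A j k) (c k))

/-- `A` is hyperbolic positive if `(c*)ᵗ · A · c ∈ 𝔻⁺` for every bicomplex vector `c`. -/
def HypPos {I : Type} [Fintype I] (A : BCMat I I) : Prop :=
  ∀ c : I → BC, inDplus (quadForm A c)

/-- Bicomplex trace `Tr(A) = Tr(A₁) + j Tr(A₂)`. -/
def bcTrace {I : Type} [Fintype I] (A : BCMat I I) : BC := (A.1.trace, A.2.trace)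

/-- The bicomplex tensor product
`A ⊗ⱼ B = (A₁⊗B₁ − A₂⊗B₂) + j (A₁⊗B₂ + A₂⊗B₁)`. -/
def bkron {I J K L : Type} (A : BCMat I J) (B : BCMat K L) : BCMat (I × K) (J × L) :=
  (A.1 ⊗ₖ B.1 - A.2 ⊗ₖ B.2, A.1 ⊗ₖ B.2 + A.2 ⊗ₖ B.1)

end

/-!
The idempotent components `λ₁, λ₂ : 𝔹ℂ → ℂ` are multiplicative and commute with the
`*`-conjugate, so the idempotent components of `(c*)ᵗ A c` are the complex Hermitian forms
`λₖ(c)ᴴ 𝒜ₖ λₖ(c)` of the idempotent component matrices `𝒜ₖ = A₁ ∓ i A₂`. Hence `A` is hyperbolic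
positive exactly when `𝒜₁` and `𝒜₂` are positive semidefinite. The idempotent components of
`A ⊗ⱼ B` are `𝒜₁ ⊗ ℬ₁` and `𝒜₂ ⊗ ℬ₂`, and Kronecker products of positive semidefinite matrices
are positive semidefinite.
-/

open Finset

lemma Matrix.posSemidef_of_forall_star_dotProduct_mulVec_nonneg {ι : Type*} [Fintype ι]
    {M : Matrix ι ι ℂ} (h : ∀ x : ι → ℂ, 0 ≤ star x ⬝ᵥ M *ᵥ x) : M.PosSemidef := by
  classical
  rw [← isPositive_toEuclideanLin_iff, LinearMap.isPositive_iff_complex]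
  intro x
  rw [← inner_conj_symm]
  simp only [EuclideanSpace.inner_eq_star_dotProduct, Matrix.ofLp_toLpLin, Matrix.toLin'_apply,
    dotProduct_comm (M *ᵥ _)]
  obtain ⟨hre, him⟩ := Complex.nonneg_iff.mp (h x)
  simp [Complex.ext_iff, ← him, hre]

lemma inDplus_iff (z : BC) : inDplus z ↔ 0 ≤ idem1 z ∧ 0 ≤ idem2 z := by
  simp only [inDplus, Complex.nonneg_iff, eq_comm (a := (0 : ℝ))]
  tauto

@[simp]
lemma idem1_mk_zero (z : ℂ) : idem1 (z, 0) = z := by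
  simp [idem1]

@[simp]
lemma idem2_mk_zero (z : ℂ) : idem2 (z, 0) = z := by
  simp [idem2]

lemma idem1_bcMul (z w : BC) : idem1 (bcMul z w) = idem1 z * idem1 w := by
  simp only [idem1, bcMul]
  linear_combination (-(z.2 * w.2)) * Complex.I_sq

lemma idem2_bcMul (z w : BC) : idem2 (bcMul z w) = idem2 z * idem2 w := by
  simp only [idem2, bcMul]
  linear_combination (-(z.2 * w.2)) * Complex.I_sq

lemma idem1_bcStar (z : BC) : idem1 (bcStar z) = star (idem1 z) := by
  simp only [idem1, bcStar, RCLike.star_def, map_sub, map_mul, Complex.conj_I]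
  ring

lemma idem2_bcStar (z : BC) : idem2 (bcStar z) = star (idem2 z) := by
  simp only [idem2, bcStar, RCLike.star_def, map_add, map_mul, Complex.conj_I]
  ring

lemma idem1_sum {ι : Type*} (s : Finset ι) (f : ι → BC) :
    idem1 (∑ i ∈ s, f i) = ∑ i ∈ s, idem1 (f i) := by
  simp [idem1, Prod.fst_sum, Prod.snd_sum, mul_sum, sum_sub_distrib]

lemma idem2_sum {ι : Type*} (s : Finset ι) (f : ι → BC) :
    idem2 (∑ i ∈ s, f i) = ∑ i ∈ s, idem2 (f i) := by
  simp [idem2, Prod.fst_sum, Prod.snd_sum, mul_sum, sum_add_distrib]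

section QuadForm

variable {I : Type} [Fintype I]

lemma idem1_quadForm (A : BCMat I I) (c : I → BC) :
    idem1 (quadForm A c) = star (idem1 ∘ c) ⬝ᵥ midem1 A *ᵥ (idem1 ∘ c) := by
  simp only [quadForm, idem1_sum, idem1_bcMul, idem1_bcStar, dotProduct, mulVec, mul_sum]
  rfl

lemma idem2_quadForm (A : BCMat I I) (c : I → BC) :
    idem2 (quadForm A c) = star (idem2 ∘ c) ⬝ᵥ midem2 A *ᵥ (idem2 ∘ c) := by
  simp only [quadForm, idem2_sum, idem2_bcMul, idem2_bcStar, dotProduct, mulVec, mul_sum]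
  rfl

theorem hypPos_iff (A : BCMat I I) :
    HypPos A ↔ (midem1 A).PosSemidef ∧ (midem2 A).PosSemidef := by
  constructor
  · intro hA
    have hreal (x : I → ℂ) := (inDplus_iff _).mp (hA fun i => (x i, 0))
    simp only [idem1_quadForm, idem2_quadForm, Function.comp_def, idem1_mk_zero,
      idem2_mk_zero] at hreal
    exact ⟨posSemidef_of_forall_star_dotProduct_mulVec_nonneg fun x => (hreal x).1,
      posSemidef_of_forall_star_dotProduct_mulVec_nonneg fun x => (hreal x).2⟩
  · rintro ⟨h1, h2⟩ c
    rw [inDplus_iff, idem1_quadForm, idem2_quadForm]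
    exact ⟨h1.dotProduct_mulVec_nonneg _, h2.dotProduct_mulVec_nonneg _⟩

end QuadForm

section Kronecker

variable {I J K L : Type}

lemma midem1_bkron (A : BCMat I J) (B : BCMat K L) :
    midem1 (bkron A B) = midem1 A ⊗ₖ midem1 B := by
  ext ⟨i, k⟩ ⟨j, l⟩
  simp only [midem1, bkron, Matrix.sub_apply, Matrix.add_apply, Matrix.smul_apply,
    kroneckerMap_apply, smul_eq_mul]
  linear_combination (-(A.2 i j * B.2 k l)) * Complex.I_sq

lemma midem2_bkron (A : BCMat I J) (B : BCMat K L) :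
    midem2 (bkron A B) = midem2 A ⊗ₖ midem2 B := by
  ext ⟨i, k⟩ ⟨j, l⟩
  simp only [midem2, bkron, Matrix.sub_apply, Matrix.add_apply, Matrix.smul_apply,
    kroneckerMap_apply, smul_eq_mul]
  linear_combination (-(A.2 i j * B.2 k l)) * Complex.I_sq

end Kronecker

noncomputable section

/-- the bicomplex tensor product of hyperbolic positive matrices
is hyperbolic positive. -/
theorem bkron_hypPos {n m : ℕ} (A : BCMat (Fin n) (Fin n)) (B : BCMat (Fin m) (Fin m))
    (hA : HypPos A) (hB : HypPos B) : HypPos (bkron A B) := by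
  rw [hypPos_iff] at hA hB ⊢
  rw [midem1_bkron, midem2_bkron]
  exact ⟨hA.1.kronecker hB.1, hA.2.kronecker hB.2⟩

end
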